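/- For an n-dimensional convex body K in ℝ^n and a point z in the interior of K, let N_a(K,z) denote the number (possibly infinite) of affine diameters of K passing through z, where an affine diameter is a closed segment joining two points lying in distinct parallel supporting hyperplanes of K. Then the function z ↦ N_a(K,z) is Borel measurable on the interior of K. -/

import Mathlib

open MeasureTheory
open scoped Pointwise ENNReal

noncomputable section

/-- An affine diameter of `K`: a pair of points of `K` lying in distinct parallel
supporting hyperplanes. -/
def IsAffDiam {n : ℕ} (K : Set (EuclideanSpace ℝ (Fin n))) (x y : EuclideanSpace ℝ (Fin n)) :
    Prop :=
  x ∈ K ∧ y ∈ K ∧ ∃ u : EuclideanSpace ℝ (Fin n), ‖u‖ = 1 ∧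
    (∀ z ∈ K, inner ℝ u z ≤ (inner ℝ u x : ℝ)) ∧
    (∀ z ∈ K, (inner ℝ u y : ℝ) ≤ inner ℝ u z) ∧
    (inner ℝ u y : ℝ) < inner ℝ u x

/-- The set of affine diameters (as segments) of `K` passing through `z`. -/
def diamsThrough {n : ℕ} (K : Set (EuclideanSpace ℝ (Fin n))) (z : EuclideanSpace ℝ (Fin n)) :
    Set (Set (EuclideanSpace ℝ (Fin n))) :=
  {s | ∃ x y, IsAffDiam K x y ∧ s = segment ℝ x y ∧ z ∈ s}

/-- The number (possibly infinite) of affine diameters of `K` through `z`. -/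
def Na {n : ℕ} (K : Set (EuclideanSpace ℝ (Fin n))) (z : EuclideanSpace ℝ (Fin n)) : ℝ≥0∞ :=
  (diamsThrough K z).encard


/-! The pairs `(x, y)` spanning an affine diameter form a closed set `D`: the supporting direction
ranges over the compact unit sphere, and an interior point keeps the two supporting hyperplanes
apart. As a segment determines its endpoints up to order, distinctness of segments is an open
condition on their endpoints. Hence `{z | k ≤ N_a(K, z)}` is the projection of a closed set
intersected with an open set of `(Fin k → E × E) × E`; such a set is σ-compact, so its projection
is σ-compact and in particular Borel. Measurability of an `ℕ∞`-valued function is decided on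
these superlevel sets. -/

open Set Function Filter Topology
open scoped RealInnerProductSpace

section Segment

variable {𝕜 V P : Type*} [Field 𝕜] [LinearOrder 𝕜] [IsStrictOrderedRing 𝕜] [AddCommGroup V]
  [Module 𝕜 V]

theorem eq_or_eq_of_wbtw_of_wbtw_of_wbtw [AddTorsor V P] {x y x' y' : P} (hx' : Wbtw 𝕜 x x' y)
    (hy' : Wbtw 𝕜 x y' y) (h : Wbtw 𝕜 x' x y') : x = x' ∨ x = y' := by
  obtain ⟨a, ha, rfl⟩ := hx'
  obtain ⟨b, hb, rfl⟩ := hy'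
  rcases wbtw_or_wbtw_smul_vadd_of_nonneg (R := 𝕜) x (y -ᵥ x) ha.1 hb.1 with h' | h'
  · exact Or.inl ((wbtw_swap_left_iff 𝕜 _).1 ⟨h', h⟩)
  · exact Or.inr ((wbtw_swap_left_iff 𝕜 _).1 ⟨h', h.symm⟩)

theorem segment_eq_segment_iff {x y x' y' : V} :
    segment 𝕜 x y = segment 𝕜 x' y' ↔ (x = x' ∧ y = y') ∨ (x = y' ∧ y = x') := by
  refine ⟨fun h => ?_, ?_⟩
  · have hx' : Wbtw 𝕜 x x' y := mem_segment_iff_wbtw.1 (h ▸ left_mem_segment 𝕜 x' y')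
    have hy' : Wbtw 𝕜 x y' y := mem_segment_iff_wbtw.1 (h ▸ right_mem_segment 𝕜 x' y')
    have hx : Wbtw 𝕜 x' x y' := mem_segment_iff_wbtw.1 (h.symm ▸ left_mem_segment 𝕜 x y)
    have hy : Wbtw 𝕜 x' y y' := mem_segment_iff_wbtw.1 (h.symm ▸ right_mem_segment 𝕜 x y)
    rcases eq_or_eq_of_wbtw_of_wbtw_of_wbtw hx' hy' hx with rfl | rfl
    · exact Or.inl ⟨rfl, (wbtw_swap_right_iff 𝕜 x).1 ⟨hy, hy'⟩⟩
    · exact Or.inr ⟨rfl, (wbtw_swap_right_iff 𝕜 x).1 ⟨hy.symm, hx'⟩⟩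
  · rintro (⟨rfl, rfl⟩ | ⟨rfl, rfl⟩)
    · rfl
    · exact segment_symm 𝕜 _ _

theorem isOpen_setOf_segment_ne [TopologicalSpace V] [T2Space V] :
    IsOpen {p : (V × V) × (V × V) | segment 𝕜 p.1.1 p.1.2 ≠ segment 𝕜 p.2.1 p.2.2} := by
  have : {p : (V × V) × (V × V) | segment 𝕜 p.1.1 p.1.2 ≠ segment 𝕜 p.2.1 p.2.2} =
      {p | p.1 ≠ p.2} ∩ {p | p.1 ≠ p.2.swap} := by
    ext ⟨⟨x, y⟩, x', y'⟩
    simp [segment_eq_segment_iff]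
  rw [this]
  exact (isOpen_ne_fun continuous_fst continuous_snd).inter
    (isOpen_ne_fun continuous_fst (continuous_swap.comp continuous_snd))

end Segment

theorem isClosed_setOf_mem_segment {V : Type*} [NormedAddCommGroup V] [NormedSpace ℝ V]
    [StrictConvexSpace ℝ V] : IsClosed {q : (V × V) × V | q.2 ∈ segment ℝ q.1.1 q.1.2} := by
  simp only [mem_segment_iff_wbtw, ← dist_add_dist_eq_iff]
  exact isClosed_eq (by fun_prop) (by fun_prop)

theorem Set.natCast_le_encard_iff {α : Type*} {s : Set α} {k : ℕ} :
    (k : ℕ∞) ≤ s.encard ↔ ∃ f : Fin k → α, Injective f ∧ ∀ i, f i ∈ s := by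
  constructor
  · intro h
    obtain ⟨t, hts, htk⟩ := exists_subset_encard_eq h
    have : Finite t := finite_of_encard_eq_coe htk
    have hcard : Nat.card t = k := by rw [Nat.card_coe_set_eq, ncard_def, htk]; rfl
    let e : Fin k ≃ t := (Finite.equivFinOfCardEq hcard).symm
    exact ⟨fun i => e i, Subtype.val_injective.comp e.injective, fun i => hts (e i).2⟩
  · rintro ⟨f, hf, hfs⟩
    calc (k : ℕ∞) = ENat.card (Fin k) := by simp
      _ ≤ (range f).encard := hf.encard_range
      _ ≤ s.encard := encard_le_encard (range_subset_iff.2 hfs)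

theorem Set.natCast_le_encard_image_iff {α β : Type*} {s : Set α} {g : α → β} {k : ℕ} :
    (k : ℕ∞) ≤ (g '' s).encard ↔ ∃ w : Fin k → α, Injective (g ∘ w) ∧ ∀ i, w i ∈ s := by
  rw [natCast_le_encard_iff]
  constructor
  · rintro ⟨f, hf, hfs⟩
    choose w hws hw using hfs
    exact ⟨w, by rwa [show g ∘ w = f from funext hw], hws⟩
  · rintro ⟨w, hw, hws⟩
    exact ⟨g ∘ w, hw, fun i => mem_image_of_mem g (hws i)⟩

theorem isOpen_setOf_injective_comp {ι X α : Type*} [Finite ι] [TopologicalSpace X] {g : X → α}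
    (hg : IsOpen {p : X × X | g p.1 ≠ g p.2}) : IsOpen {w : ι → X | Injective (g ∘ w)} := by
  have : {w : ι → X | Injective (g ∘ w)} = ⋂ i, ⋂ j, {w | g (w i) = g (w j) → i = j} := by
    ext w; simp [Injective]
  rw [this]
  refine isOpen_iInter_of_finite fun i => isOpen_iInter_of_finite fun j => ?_
  by_cases hij : i = j
  · simp [hij]
  · have hc : Continuous fun w : ι → X => (w i, w j) := by fun_prop
    simpa [hij] using hc.isOpen_preimage _ hg

theorem IsLocallyClosed.isSigmaCompact {X : Type*} [TopologicalSpace X] [LocallyCompactSpace X]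
    [SecondCountableTopology X] {s : Set X} (hs : IsLocallyClosed s) : IsSigmaCompact s := by
  have := hs.locallyCompactSpace
  exact isSigmaCompact_iff_sigmaCompactSpace.2 inferInstance

theorem isSigmaCompact_setOf_natCast_le_encard_image {X Y α : Type*} [TopologicalSpace X]
    [TopologicalSpace Y] [LocallyCompactSpace X] [LocallyCompactSpace Y]
    [SecondCountableTopology X] [SecondCountableTopology Y] {R : Set (X × Y)} (hR : IsClosed R)
    {g : X → α} (hg : IsOpen {p : X × X | g p.1 ≠ g p.2}) (k : ℕ) :
    IsSigmaCompact {y | (k : ℕ∞) ≤ (g '' {x | (x, y) ∈ R}).encard} := by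
  have hlevel_eq : {y | (k : ℕ∞) ≤ (g '' {x | (x, y) ∈ R}).encard} =
      Prod.snd '' ({q : (Fin k → X) × Y | ∀ i, (q.1 i, q.2) ∈ R} ∩
        {q | Injective (g ∘ q.1)}) := by
    ext y
    simp only [mem_ofPred_eq, natCast_le_encard_image_iff, mem_image, mem_inter_iff, Prod.exists,
      exists_eq_right]
    tauto
  have hclosed : IsClosed {q : (Fin k → X) × Y | ∀ i, (q.1 i, q.2) ∈ R} := by
    simp only [ofPred_forall]
    exact isClosed_iInter fun i =>
      hR.preimage (((continuous_apply i).comp continuous_fst).prodMk continuous_snd)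
  have hopen : IsOpen {q : (Fin k → X) × Y | Injective (g ∘ q.1)} :=
    (isOpen_setOf_injective_comp hg).preimage continuous_fst
  rw [hlevel_eq]
  exact (hclosed.isLocallyClosed.inter hopen.isLocallyClosed).isSigmaCompact.image continuous_snd

theorem IsSigmaCompact.measurableSet {X : Type*} [TopologicalSpace X] [T2Space X]
    [MeasurableSpace X] [OpensMeasurableSpace X] {s : Set X} (hs : IsSigmaCompact s) :
    MeasurableSet s := by
  obtain ⟨K, hK, rfl⟩ := hs
  exact .iUnion fun n => (hK n).isClosed.measurableSet

theorem ENat.measurable_of_measurableSet_le {α : Type*} [MeasurableSpace α] {f : α → ℕ∞}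
    (h : ∀ n : ℕ, MeasurableSet {a | (n : ℕ∞) ≤ f a}) : Measurable f := by
  refine ENat.measurable_iff.2 fun n => ?_
  convert (h n).diff (h (n + 1)) using 1
  ext a
  simp only [mem_preimage, mem_singleton_iff, Nat.cast_succ, Set.mem_sdiff, mem_ofPred_eq,
    ENat.add_one_le_iff (ENat.natCast_ne_top n), not_lt]
  exact ⟨fun ha => ⟨ha.ge, ha.le⟩, fun ha => le_antisymm ha.2 ha.1⟩

section AffineDiameter

variable {n : ℕ} {K : Set (EuclideanSpace ℝ (Fin n))}

local notation "E" => EuclideanSpace ℝ (Fin n)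

theorem isAffDiam_iff_of_nonempty_interior (hK : (interior K).Nonempty) {x y : E} :
    IsAffDiam K x y ↔ x ∈ K ∧ y ∈ K ∧ ∃ u : E, ‖u‖ = 1 ∧
      (∀ z ∈ K, ⟪u, z⟫ ≤ ⟪u, x⟫) ∧ (∀ z ∈ K, ⟪u, y⟫ ≤ ⟪u, z⟫) := by
  refine ⟨fun ⟨hx, hy, u, hu, hmax, hmin, _⟩ => ⟨hx, hy, u, hu, hmax, hmin⟩, ?_⟩
  rintro ⟨hx, hy, u, hu, hmax, hmin⟩
  refine ⟨hx, hy, u, hu, hmax, hmin, ?_⟩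
  obtain ⟨c, hc⟩ := hK
  have hline : Tendsto (fun t : ℝ => c + t • u) (𝓝[>] 0) (𝓝 c) := by
    have : Continuous fun t : ℝ => c + t • u := by fun_prop
    simpa using this.continuousAt.tendsto.mono_left (nhdsWithin_le_nhds (a := (0 : ℝ)))
  obtain ⟨t, htK, ht⟩ :=
    ((hline.eventually (mem_interior_iff_mem_nhds.1 hc)).and self_mem_nhdsWithin).exists
  calc ⟪u, y⟫ ≤ ⟪u, c⟫ := hmin c (interior_subset hc)
    _ < ⟪u, c + t • u⟫ := by
      rw [inner_add_right, real_inner_smul_right, real_inner_self_eq_norm_sq, hu]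
      simpa using ht
    _ ≤ ⟪u, x⟫ := hmax _ htK

theorem isCompact_setOf_isAffDiam (hKc : IsCompact K) (hK : (interior K).Nonempty) :
    IsCompact {p : E × E | IsAffDiam K p.1 p.2} := by
  set D : Set ((E × E) × E) := (K ×ˢ K) ×ˢ Metric.sphere 0 1 ∩
    ⋂ z ∈ K, ({q | ⟪q.2, z⟫ ≤ ⟪q.2, q.1.1⟫} ∩ {q | ⟪q.2, q.1.2⟫ ≤ ⟪q.2, z⟫})
  have hD : IsCompact D := ((hKc.prod hKc).prod (isCompact_sphere 0 1)).inter_right <|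
    isClosed_biInter fun z _ => (isClosed_le (by fun_prop) (by fun_prop)).inter
      (isClosed_le (by fun_prop) (by fun_prop))
  convert hD.image continuous_fst using 1
  ext ⟨x, y⟩
  simp only [isAffDiam_iff_of_nonempty_interior hK, mem_ofPred_eq, mem_image, mem_inter_iff,
    mem_prod, mem_sphere_iff_norm, sub_zero, mem_iInter, forall_and, Prod.exists,
    exists_and_right, exists_eq_right, D]
  tauto

theorem diamsThrough_eq_image (z : E) :
    diamsThrough K z = (fun p : E × E => segment ℝ p.1 p.2) ''
      {p | IsAffDiam K p.1 p.2 ∧ z ∈ segment ℝ p.1 p.2} := by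
  ext s
  constructor
  · rintro ⟨x, y, hxy, rfl, hz⟩
    exact ⟨(x, y), ⟨hxy, hz⟩, rfl⟩
  · rintro ⟨⟨x, y⟩, ⟨hxy, hz⟩, rfl⟩
    exact ⟨x, y, hxy, rfl, hz⟩

theorem measurable_Na (hKc : IsCompact K) (hK : (interior K).Nonempty) : Measurable (Na K) := by
  have hR : IsClosed {q : (E × E) × E | IsAffDiam K q.1.1 q.1.2 ∧ q.2 ∈ segment ℝ q.1.1 q.1.2} :=
    ((isCompact_setOf_isAffDiam hKc hK).isClosed.preimage continuous_fst).inter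
      isClosed_setOf_mem_segment
  have hlevel (k : ℕ) : MeasurableSet {z : E | (k : ℕ∞) ≤ (diamsThrough K z).encard} := by
    simpa only [diamsThrough_eq_image, mem_ofPred_eq] using
      (isSigmaCompact_setOf_natCast_le_encard_image hR isOpen_setOf_segment_ne k).measurableSet
  exact Measurable.of_discrete.comp (ENat.measurable_of_measurableSet_le hlevel)

end AffineDiameter

theorem Na_measurable_general {n : ℕ} (K : Set (EuclideanSpace ℝ (Fin n)))
    (hKc : IsCompact K) (hKint : (interior K).Nonempty) :
    Measurable fun z : interior K => Na K z :=
  (measurable_Na hKc hKint).comp measurable_subtype_coe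

theorem Na_measurable {n : ℕ} (K : Set (EuclideanSpace ℝ (Fin n)))
    (hKc : IsCompact K) (hKconv : Convex ℝ K) (hKint : (interior K).Nonempty) :
    Measurable fun z : interior K => Na K z :=
  Na_measurable_general K hKc hKint
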